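/- arXiv:1902.08149 — 2 statements merged into one kernel-verified Lean document; each statement's English description precedes it below -/
import Mathlib

section
/- Every trimmed unambiguous automaton is SCC-unambiguous. -/
/-!
Let `ρ₁, ρ₂` be runs from `p` to `q` on `u`, where `q` leads back to `p` along some run `σ`.
Since the automaton is trimmed, `p` lies on an accepting run, which splits at `p` into a prefix
`π` from an initial state and a suffix `τ` to a final state. Then `π ρₖ σ τ` (k = 1, 2) are
accepting runs on the same word, so unambiguity makes them equal, and cancelling the common
prefix and suffix (the `ρₖ` have the same length) gives `ρ₁ = ρ₂`.
-/

variable {Q Q' A R : Type*}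

/-- `RunFrom Δ p w ρ`: `ρ` is the list of states visited after `p` along a run
reading `w` that starts in `p`. -/
def RunFrom (Δ : Q → A → Q → Prop) : Q → List A → List Q → Prop
  | _, [], [] => True
  | p, a :: w, q :: ρ => Δ p a q ∧ RunFrom Δ q w ρ
  | _, _, _ => False

/-- There is a run from `p` to `q` reading `w`. -/
def HasRun (Δ : Q → A → Q → Prop) (p : Q) (w : List A) (q : Q) : Prop :=
  ∃ ρ, RunFrom Δ p w ρ ∧ (p :: ρ).getLast (List.cons_ne_nil _ _) = q

/-- `m`-fold power of a word. -/
def wpow (u : List A) (m : ℕ) : List A := (List.replicate m u).flatten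

/-- Aperiodicity of a nondeterministic automaton. -/
def Aperiodic (Δ : Q → A → Q → Prop) : Prop :=
  ∃ m, 1 ≤ m ∧ ∀ (p q : Q) (u : List A), u ≠ [] →
    (HasRun Δ p (wpow u m) q ↔ HasRun Δ p (wpow u (m + 1)) q)

/-- `p` and `q` are in the same strongly connected component. -/
def SameSCC (Δ : Q → A → Q → Prop) (p q : Q) : Prop :=
  p = q ∨ ((∃ u : List A, u ≠ [] ∧ HasRun Δ p u q) ∧ (∃ v : List A, v ≠ [] ∧ HasRun Δ q v p))

/-- The automaton is unambiguous from `p` to `q`. -/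
def UnambFromTo (Δ : Q → A → Q → Prop) (p q : Q) : Prop :=
  ∀ (u : List A) (ρ₁ ρ₂ : List Q), u ≠ [] →
    RunFrom Δ p u ρ₁ → RunFrom Δ p u ρ₂ →
    (p :: ρ₁).getLast (List.cons_ne_nil _ _) = q →
    (p :: ρ₂).getLast (List.cons_ne_nil _ _) = q → ρ₁ = ρ₂

def SCCUnambiguous (Δ : Q → A → Q → Prop) : Prop :=
  ∀ p q : Q, SameSCC Δ p q → UnambFromTo Δ p q

/-- The set of accepting runs on `w`, represented as pairs of an initial state and
the list of subsequently visited states. -/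
def AccRuns (Δ : Q → A → Q → Prop) (I F : Set Q) (w : List A) : Set (Q × List Q) :=
  {x | x.1 ∈ I ∧ RunFrom Δ x.1 w x.2 ∧ (x.1 :: x.2).getLast (List.cons_ne_nil _ _) ∈ F}

/-- The sequence of weights along a run. -/
def wgtSeq (wgt : Q → A → Q → R) : Q → List A → List Q → List R
  | p, a :: w, q :: ρ => wgt p a q :: wgtSeq wgt q w ρ
  | _, _, _ => []

section

variable {Δ : Q → A → Q → Prop}

theorem List.getLast_cons_append_of_getLast_eq {p q : Q} {ρ σ : List Q}
    (h : (p :: ρ).getLast (List.cons_ne_nil _ _) = q) :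
    (p :: (ρ ++ σ)).getLast (List.cons_ne_nil _ _) = (q :: σ).getLast (List.cons_ne_nil _ _) := by
  cases σ with
  | nil => simpa using h
  | cons r σ =>
    exact (List.getLast_append_of_right_ne_nil (p :: ρ) _ (List.cons_ne_nil r σ)).trans
      (List.getLast_cons _).symm

namespace RunFrom

theorem length_eq : ∀ {p : Q} {w : List A} {ρ : List Q}, RunFrom Δ p w ρ → ρ.length = w.length
  | _, [], [], _ => rfl
  | _, _ :: _, _ :: _, ⟨_, h⟩ => congrArg Nat.succ h.length_eq

theorem append : ∀ {p q : Q} {u v : List A} {ρ σ : List Q}, RunFrom Δ p u ρ →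
    (p :: ρ).getLast (List.cons_ne_nil _ _) = q → RunFrom Δ q v σ →
    RunFrom Δ p (u ++ v) (ρ ++ σ)
  | _, _, [], _, [], _, _, rfl, hσ => hσ
  | _, _, _ :: _, _, r :: _, _, ⟨hstep, hρ⟩, hq, hσ =>
    ⟨hstep, hρ.append (by rwa [List.getLast_cons (List.cons_ne_nil _ _)] at hq) hσ⟩

theorem exists_split_of_mem : ∀ {i q : Q} {w : List A} {ρ : List Q}, RunFrom Δ i w ρ →
    q ∈ i :: ρ → ∃ w₁ w₂ π τ, w = w₁ ++ w₂ ∧ ρ = π ++ τ ∧ RunFrom Δ i w₁ π ∧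
      (i :: π).getLast (List.cons_ne_nil _ _) = q ∧ RunFrom Δ q w₂ τ
  | _, _, [], [], _, hq => by
    obtain rfl := List.mem_singleton.mp hq
    exact ⟨[], [], [], [], rfl, rfl, trivial, rfl, trivial⟩
  | _, _, a :: w, r :: ρ, ⟨hstep, hρ⟩, hq => by
    rcases List.mem_cons.mp hq with rfl | hq
    · exact ⟨[], a :: w, [], r :: ρ, rfl, rfl, trivial, rfl, hstep, hρ⟩
    · obtain ⟨w₁, w₂, π, τ, rfl, rfl, hπ, hπq, hτ⟩ := hρ.exists_split_of_mem hq
      exact ⟨a :: w₁, w₂, r :: π, τ, rfl, rfl, ⟨hstep, hπ⟩,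
        by rwa [List.getLast_cons (List.cons_ne_nil _ _)], hτ⟩

end RunFrom

theorem SameSCC.exists_hasRun_back {p q : Q} : SameSCC Δ p q → ∃ v, HasRun Δ q v p
  | Or.inl rfl => ⟨[], [], trivial, rfl⟩
  | Or.inr ⟨_, v, _, hv⟩ => ⟨v, hv⟩

theorem mem_accRuns_append {I F : Set Q} {i p q : Q} {x u y : List A} {π ρ τ : List Q}
    (hi : i ∈ I) (hπ : RunFrom Δ i x π) (hπp : (i :: π).getLast (List.cons_ne_nil _ _) = p)
    (hρ : RunFrom Δ p u ρ) (hρq : (p :: ρ).getLast (List.cons_ne_nil _ _) = q)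
    (hτ : RunFrom Δ q y τ) (hτF : (q :: τ).getLast (List.cons_ne_nil _ _) ∈ F) :
    (i, π ++ (ρ ++ τ)) ∈ AccRuns Δ I F (x ++ (u ++ y)) :=
  ⟨hi, hπ.append hπp (hρ.append hρq hτ), by
    rwa [List.getLast_cons_append_of_getLast_eq hπp, List.getLast_cons_append_of_getLast_eq hρq]⟩

end

/-- Every trimmed unambiguous automaton is SCC-unambiguous. -/
theorem sccUnambiguous_of_unambiguous (Δ : Q → A → Q → Prop) (I F : Set Q)
    (htrim : ∀ q : Q, ∃ (w : List A) (x : Q × List Q),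
      x ∈ AccRuns Δ I F w ∧ q ∈ x.1 :: x.2)
    (hunamb : ∀ w : List A, ∀ x y : Q × List Q,
      x ∈ AccRuns Δ I F w → y ∈ AccRuns Δ I F w → x = y) :
    SCCUnambiguous Δ := by
  rintro p q hpq u ρ₁ ρ₂ - hρ₁ hρ₂ hq₁ hq₂
  obtain ⟨v, σ, hσ, hσp⟩ := hpq.exists_hasRun_back
  obtain ⟨w, ⟨i, ρ⟩, ⟨hi, hρ, hF⟩, hp⟩ := htrim p
  obtain ⟨x, y, π, τ, rfl, rfl, hπ, hπp, hτ⟩ := hρ.exists_split_of_mem hp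
  have hστ := hσ.append hσp hτ
  have hστF : (q :: (σ ++ τ)).getLast (List.cons_ne_nil _ _) ∈ F := by
    rwa [List.getLast_cons_append_of_getLast_eq hσp,
      ← List.getLast_cons_append_of_getLast_eq hπp]
  have hacc := hunamb _ _ _ (mem_accRuns_append hi hπ hπp hρ₁ hq₁ hστ hστF)
    (mem_accRuns_append hi hπ hπp hρ₂ hq₂ hστ hστF)
  exact (List.append_inj (List.append_cancel_left (congrArg Prod.snd hacc))
    (hρ₁.length_eq.trans hρ₂.length_eq.symm)).1
end

section
/- Let A be an SCC-unambiguous automaton and let p, q be states not in the same SCC. Then for every word u, the runs of A from p to q reading u are in bijection with the pairs (δ̄, σ) where δ̄ = (δ₁,…,δ_m) is a sequence of switching transitions from p to q and σ is an increasing sequence of positions i₁ < ⋯ < i_m in u such that: the i_j-th letter of u is the label of δ_j, u[1, i₁−1] labels a run from p to the source of δ₁, each u[i_j+1, i_{j+1}−1] labels a run from the target of δ_j to the source of δ_{j+1}, and u[i_m+1, |u|] labels a run from the target of δ_m to q. -/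
variable {Q Q' A R : Type*}

/-- `GoodPair Δ p q u δs σ`: `δs` is a sequence of switching transitions from `p`
to `q` and `σ` a strictly increasing sequence of positions of `u` (1-indexed) such
that the letter at position `σ j` is the label of `δs j`, the prefix of `u` before
the first position labels a run from `p` to the source of the first switching
transition, each intermediate factor labels a run from the target of one switching
transition to the source of the next, and the suffix after the last position labels
a run from the target of the last switching transition to `q`. -/
def GoodPair (Δ : Q → A → Q → Prop) (p q : Q) (u : List A)
    (δs : List (Q × A × Q)) (σ : List ℕ) : Prop :=
  δs ≠ [] ∧ δs.length = σ.length ∧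
  (∀ d ∈ δs, Δ d.1 d.2.1 d.2.2) ∧
  List.Chain' (· < ·) σ ∧
  (∀ i ∈ σ, 1 ≤ i ∧ i ≤ u.length) ∧
  (∀ j : ℕ, ∀ d ∈ δs[j]?, ∀ i ∈ σ[j]?, u[i - 1]? = some d.2.1) ∧
  -- SCC alternation conditions making `δs` a switching sequence
  (∀ d ∈ δs.head?, SameSCC Δ p d.1) ∧
  (∀ d ∈ δs, ¬ SameSCC Δ d.1 d.2.2) ∧
  (∀ j : ℕ, ∀ d ∈ δs[j]?, ∀ d' ∈ δs[j + 1]?, SameSCC Δ d.2.2 d'.1) ∧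
  (∀ d ∈ δs.getLast?, SameSCC Δ d.2.2 q) ∧
  -- the factors of `u` between consecutive switching positions label runs
  (∀ d ∈ δs.head?, ∀ i ∈ σ.head?, HasRun Δ p (u.take (i - 1)) d.1) ∧
  (∀ j : ℕ, ∀ d ∈ δs[j]?, ∀ i ∈ σ[j]?, ∀ d' ∈ δs[j + 1]?, ∀ i' ∈ σ[j + 1]?,
    HasRun Δ d.2.2 ((u.take (i' - 1)).drop i) d'.1) ∧
  (∀ d ∈ δs.getLast?, ∀ i ∈ σ.getLast?, HasRun Δ d.2.2 (u.drop i) q)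


/-! A run from `p` to `q ≉ p` leaves the SCC of its current state at finitely many steps;
these switching transitions and their positions form the pair attached to the run. Between two
switches the run stays inside one SCC, where SCC-unambiguity makes the run segment unique, so the
pair determines the run. The bijection is built by peeling off the first switch: a run factors
uniquely into a run inside the SCC of its start, a switching transition, and a run from its
target on the remaining suffix of `u`, and one recurses on that suffix. -/

variable {Δ : Q → A → Q → Prop}

section Runs

@[simp] lemma runFrom_nil_iff {p : Q} {ρ : List Q} : RunFrom Δ p [] ρ ↔ ρ = [] := by
  cases ρ <;> simp [RunFrom]

@[simp] lemma runFrom_cons_nil {p : Q} {a : A} {w : List A} : ¬ RunFrom Δ p (a :: w) [] :=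
  id

lemma RunFrom.length_eq_s9 {p : Q} {w : List A} {ρ : List Q} (h : RunFrom Δ p w ρ) :
    ρ.length = w.length := by
  induction w generalizing p ρ with
  | nil => simp_all
  | cons a w ih =>
    obtain _ | ⟨r, ρ⟩ := ρ
    · simp_all
    · simpa using ih h.2

lemma RunFrom.append_s9 {p : Q} {w₁ w₂ : List A} {ρ₁ ρ₂ : List Q} (h₁ : RunFrom Δ p w₁ ρ₁)
    (h₂ : RunFrom Δ (ρ₁.getLastD p) w₂ ρ₂) : RunFrom Δ p (w₁ ++ w₂) (ρ₁ ++ ρ₂) := by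
  induction w₁ generalizing p ρ₁ with
  | nil => simp_all
  | cons a w ih =>
    cases ρ₁ with
    | nil => simp_all
    | cons r ρ => exact ⟨h₁.1, ih h₁.2 (by rwa [List.getLastD_cons] at h₂)⟩

lemma List.getLastD_append (l₁ l₂ : List Q) (p : Q) :
    (l₁ ++ l₂).getLastD p = l₂.getLastD (l₁.getLastD p) := by
  induction l₁ generalizing p with
  | nil => rfl
  | cons r l ih => simp only [List.cons_append, List.getLastD_cons, ih]

lemma hasRun_iff {p q : Q} {w : List A} :
    HasRun Δ p w q ↔ ∃ ρ, RunFrom Δ p w ρ ∧ ρ.getLastD p = q := by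
  simp only [HasRun, List.getLast_eq_getLastD]

lemma RunFrom.hasRun {p : Q} {w : List A} {ρ : List Q} (h : RunFrom Δ p w ρ) :
    HasRun Δ p w (ρ.getLastD p) :=
  hasRun_iff.2 ⟨ρ, h, rfl⟩

@[simp] lemma hasRun_nil_iff {p q : Q} : HasRun Δ p [] q ↔ p = q := by
  simp [hasRun_iff]

lemma HasRun.append_s9 {p r q : Q} {w₁ w₂ : List A} (h₁ : HasRun Δ p w₁ r) (h₂ : HasRun Δ r w₂ q) :
    HasRun Δ p (w₁ ++ w₂) q := by
  obtain ⟨ρ₁, hρ₁, rfl⟩ := hasRun_iff.1 h₁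
  obtain ⟨ρ₂, hρ₂, rfl⟩ := hasRun_iff.1 h₂
  exact hasRun_iff.2 ⟨ρ₁ ++ ρ₂, hρ₁.append_s9 hρ₂, List.getLastD_append _ _ _⟩

lemma HasRun.cons {p r q : Q} {a : A} {w : List A} (hδ : Δ p a r) (h : HasRun Δ r w q) :
    HasRun Δ p (a :: w) q := by
  obtain ⟨ρ, hρ, rfl⟩ := hasRun_iff.1 h
  exact hasRun_iff.2 ⟨r :: ρ, ⟨hδ, hρ⟩, List.getLastD_cons⟩

end Runs

section SCC

variable (Δ) in
def Reach (p q : Q) : Prop := ∃ w : List A, HasRun Δ p w q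

lemma Reach.refl (p : Q) : Reach Δ p p := ⟨[], hasRun_nil_iff.2 rfl⟩

lemma Reach.trans {p r q : Q} (h₁ : Reach Δ p r) (h₂ : Reach Δ r q) : Reach Δ p q :=
  let ⟨_, h₁⟩ := h₁; let ⟨_, h₂⟩ := h₂; ⟨_, h₁.append_s9 h₂⟩

lemma Reach.of_step {p q : Q} {a : A} (h : Δ p a q) : Reach Δ p q :=
  ⟨[a], HasRun.cons h (hasRun_nil_iff.2 rfl)⟩

lemma sameSCC_iff_reach {p q : Q} : SameSCC Δ p q ↔ Reach Δ p q ∧ Reach Δ q p := by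
  constructor
  · rintro (rfl | ⟨⟨w, -, hw⟩, ⟨v, -, hv⟩⟩)
    · exact ⟨Reach.refl p, Reach.refl p⟩
    · exact ⟨⟨w, hw⟩, ⟨v, hv⟩⟩
  · rintro ⟨⟨w, hw⟩, ⟨v, hv⟩⟩
    by_cases hpq : p = q
    · exact Or.inl hpq
    · refine Or.inr ⟨⟨w, ?_, hw⟩, ⟨v, ?_, hv⟩⟩ <;> rintro rfl <;> simp_all [eq_comm]

lemma SameSCC.refl (p : Q) : SameSCC Δ p p := Or.inl rfl

lemma SameSCC.symm {p q : Q} (h : SameSCC Δ p q) : SameSCC Δ q p :=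
  sameSCC_iff_reach.2 (sameSCC_iff_reach.1 h).symm

lemma SameSCC.trans {p r q : Q} (h₁ : SameSCC Δ p r) (h₂ : SameSCC Δ r q) : SameSCC Δ p q := by
  rw [sameSCC_iff_reach] at *
  exact ⟨h₁.1.trans h₂.1, h₂.2.trans h₁.2⟩

lemma RunFrom.reach_of_mem {p x : Q} {w : List A} {ρ : List Q} (h : RunFrom Δ p w ρ)
    (hx : x ∈ ρ) : Reach Δ p x ∧ Reach Δ x (ρ.getLastD p) := by
  induction w generalizing p ρ with
  | nil => simp_all
  | cons a w ih =>
    obtain _ | ⟨r, ρ⟩ := ρ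
    · simp_all
    obtain ⟨hpr, hρ⟩ := h
    rw [List.getLastD_cons]
    obtain rfl | hx := List.mem_cons.1 hx
    · exact ⟨.of_step hpr, ⟨w, hρ.hasRun⟩⟩
    · exact (ih hρ hx).imp_left (Reach.of_step hpr).trans

lemma RunFrom.sameSCC_of_mem {p x : Q} {w : List A} {ρ : List Q} (h : RunFrom Δ p w ρ)
    (hp : SameSCC Δ p (ρ.getLastD p)) (hx : x ∈ ρ) : SameSCC Δ p x :=
  sameSCC_iff_reach.2
    ⟨(h.reach_of_mem hx).1, (h.reach_of_mem hx).2.trans (sameSCC_iff_reach.1 hp).2⟩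

lemma RunFrom.exists_switch {p : Q} {w : List A} {ρ : List Q} (h : RunFrom Δ p w ρ)
    (hp : ¬ SameSCC Δ p (ρ.getLastD p)) :
    ∃ w₁ a w₂ ρ₁ y ρ₂, w = w₁ ++ a :: w₂ ∧ ρ = ρ₁ ++ y :: ρ₂ ∧ RunFrom Δ p w₁ ρ₁ ∧
      SameSCC Δ p (ρ₁.getLastD p) ∧ Δ (ρ₁.getLastD p) a y ∧
      ¬ SameSCC Δ (ρ₁.getLastD p) y ∧ RunFrom Δ y w₂ ρ₂ := by
  induction w generalizing p ρ with
  | nil => simp_all [SameSCC.refl]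
  | cons a w ih =>
    obtain _ | ⟨r, ρ⟩ := ρ
    · simp_all
    obtain ⟨hpr, hρ⟩ := h
    rw [List.getLastD_cons] at hp
    by_cases hsw : SameSCC Δ p r
    · obtain ⟨w₁, b, w₂, ρ₁, y, ρ₂, rfl, rfl, hρ₁, hr, hδ, hy, hρ₂⟩ :=
        ih hρ fun hr => hp (hsw.trans hr)
      exact ⟨a :: w₁, b, w₂, r :: ρ₁, y, ρ₂, rfl, rfl, ⟨hpr, hρ₁⟩,
        by rw [List.getLastD_cons]; exact hsw.trans hr, by rwa [List.getLastD_cons],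
        by rwa [List.getLastD_cons], hρ₂⟩
    · exact ⟨[], a, w, [], r, ρ, rfl, rfl, trivial, .refl p, hpr, hsw, hρ⟩

lemma SCCUnambiguous.eq_of_runFrom (hu : SCCUnambiguous Δ) {p r : Q} {w : List A}
    {ρ₁ ρ₂ : List Q} (hpr : SameSCC Δ p r) (h₁ : RunFrom Δ p w ρ₁) (h₂ : RunFrom Δ p w ρ₂)
    (e₁ : ρ₁.getLastD p = r) (e₂ : ρ₂.getLastD p = r) : ρ₁ = ρ₂ := by
  cases w with
  | nil => simp_all
  | cons a w =>
    exact hu p r hpr _ ρ₁ ρ₂ (List.cons_ne_nil _ _) h₁ h₂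
      (by rwa [List.getLast_eq_getLastD]) (by rwa [List.getLast_eq_getLastD])

end SCC

lemma List.eq_of_append_cons_eq {α : Type*} {P : α → Prop} {l₁ l₂ m₁ m₂ : List α} {a b : α}
    (h : l₁ ++ a :: l₂ = m₁ ++ b :: m₂) (hl : ∀ x ∈ l₁, P x) (ha : ¬ P a)
    (hm : ∀ x ∈ m₁, P x) (hb : ¬ P b) : l₁ = m₁ ∧ a = b ∧ l₂ = m₂ := by
  induction l₁ generalizing m₁ with
  | nil =>
    obtain _ | ⟨y, m⟩ := m₁
    · simpa using h
    · obtain ⟨rfl, -⟩ := List.cons.inj h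
      exact absurd (hm _ List.mem_cons_self) ha
  | cons x l ih =>
    obtain _ | ⟨y, m⟩ := m₁
    · obtain ⟨rfl, -⟩ := List.cons.inj h
      exact absurd (hl _ List.mem_cons_self) hb
    · obtain ⟨rfl, ht⟩ := List.cons.inj h
      simpa using ih ht (fun z hz => hl z (List.mem_cons_of_mem _ hz))
        (fun z hz => hm z (List.mem_cons_of_mem _ hz))

section Positions

variable {α : Type*}

lemma List.drop_eq_drop_take_append_cons {u : List α} {k i : ℕ} {a : α} (hki : k < i)
    (ha : u[i - 1]? = some a) : u.drop k = (u.take (i - 1)).drop k ++ a :: u.drop i := by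
  obtain ⟨j, rfl⟩ : ∃ j, i = j + 1 := ⟨i - 1, by omega⟩
  rw [Nat.add_sub_cancel] at ha ⊢
  obtain ⟨hj, rfl⟩ := List.getElem?_eq_some_iff.1 ha
  calc u.drop k = (u.take j ++ u.drop j).drop k := by rw [List.take_append_drop]
    _ = (u.take j).drop k ++ u.drop j :=
      List.drop_append_of_le_length (by simp only [List.length_take]; omega)
    _ = _ := by rw [List.drop_eq_getElem_cons hj]

lemma List.drop_take_eq_of_drop_eq_append_cons {u w₁ w₂ : List α} {k : ℕ} {a : α}
    (h : u.drop k = w₁ ++ a :: w₂) :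
    (u.take (k + w₁.length)).drop k = w₁ ∧ u[k + w₁.length]? = some a ∧
      u.drop (k + w₁.length + 1) = w₂ := by
  refine ⟨?_, ?_, ?_⟩
  · rw [← List.take_drop, h, List.take_left' rfl]
  · rw [← List.getElem?_drop, h]; simp
  · rw [Nat.add_assoc, ← List.drop_drop, h]; simp

end Positions

variable (Δ) in
/-- `δ`, read at the 1-indexed position `i`, is the first transition leaving the SCC of `r` on a
run from `r` over `u.drop k`. -/
structure FirstSwitch (u : List A) (r : Q) (k i : ℕ) (δ : Q × A × Q) : Prop where
  lt : k < i
  le_length : i ≤ u.length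
  getElem?_eq : u[i - 1]? = some δ.2.1
  step : Δ δ.1 δ.2.1 δ.2.2
  sameSCC : SameSCC Δ r δ.1
  not_sameSCC : ¬ SameSCC Δ δ.1 δ.2.2
  hasRun : HasRun Δ r ((u.take (i - 1)).drop k) δ.1

namespace FirstSwitch

variable {u : List A} {r : Q} {k i : ℕ} {δ : Q × A × Q}

lemma drop_eq (hF : FirstSwitch Δ u r k i δ) :
    u.drop k = (u.take (i - 1)).drop k ++ δ.2.1 :: u.drop i :=
  List.drop_eq_drop_take_append_cons hF.lt hF.getElem?_eq

lemma not_sameSCC_target (hF : FirstSwitch Δ u r k i δ) : ¬ SameSCC Δ r δ.2.2 :=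
  fun h => hF.not_sameSCC (hF.sameSCC.symm.trans h)

lemma not_reach_target (hF : FirstSwitch Δ u r k i δ) : ¬ Reach Δ δ.2.2 r := fun h =>
  hF.not_sameSCC <| sameSCC_iff_reach.2
    ⟨.of_step hF.step, h.trans (sameSCC_iff_reach.1 hF.sameSCC).1⟩

end FirstSwitch

variable (Δ) in
/-- Recursive form of `GoodPairFrom`, which also admits the empty sequence when `r ≈ q`. -/
def SwitchPairs (q : Q) (u : List A) : Q → ℕ → List (Q × A × Q) → List ℕ → Prop
  | r, k, [], [] => SameSCC Δ r q ∧ HasRun Δ r (u.drop k) q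
  | r, k, δ :: δs, i :: σ => FirstSwitch Δ u r k i δ ∧ SwitchPairs q u δ.2.2 i δs σ
  | _, _, _, _ => False

namespace SwitchPairs

variable {q : Q} {u : List A}

lemma hasRun : ∀ {r : Q} {k : ℕ} {δs : List (Q × A × Q)} {σ : List ℕ},
    SwitchPairs Δ q u r k δs σ → HasRun Δ r (u.drop k) q
  | _, _, [], [], h => h.2
  | _, _, _ :: _, _ :: _, ⟨hF, h⟩ => by
    rw [hF.drop_eq]
    exact hF.hasRun.append_s9 (.cons hF.step h.hasRun)

lemma eq_nil_of_sameSCC {r : Q} {k : ℕ} (hrq : SameSCC Δ r q) :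
    ∀ {δs : List (Q × A × Q)} {σ : List ℕ}, SwitchPairs Δ q u r k δs σ → δs = [] ∧ σ = []
  | [], [], _ => ⟨rfl, rfl⟩
  | _ :: _, _ :: _, ⟨hF, h⟩ =>
    (hF.not_reach_target (Reach.trans ⟨_, h.hasRun⟩ (sameSCC_iff_reach.1 hrq).2)).elim

end SwitchPairs

variable (Δ) in
def RunsTo (p : Q) (w : List A) (q : Q) : Type _ :=
  {ρ : List Q // RunFrom Δ p w ρ ∧ ρ.getLastD p = q}

variable (Δ) in
abbrev Switchings (q : Q) (u : List A) (r : Q) (k : ℕ) : Type _ :=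
  {x : List (Q × A × Q) × List ℕ // SwitchPairs Δ q u r k x.1 x.2}

section SameSCC

variable {r q : Q} {u : List A} {k : ℕ}

lemma RunsTo.subsingleton (hu : SCCUnambiguous Δ) {w : List A} (hrq : SameSCC Δ r q) :
    Subsingleton (RunsTo Δ r w q) :=
  ⟨fun ρ₁ ρ₂ => Subtype.ext (hu.eq_of_runFrom hrq ρ₁.2.1 ρ₂.2.1 ρ₁.2.2 ρ₂.2.2)⟩

lemma Switchings.subsingleton (hrq : SameSCC Δ r q) :
    Subsingleton (Switchings Δ q u r k) := by
  constructor
  rintro ⟨⟨δs₁, σ₁⟩, h₁⟩ ⟨⟨δs₂, σ₂⟩, h₂⟩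
  obtain ⟨rfl, rfl⟩ := SwitchPairs.eq_nil_of_sameSCC hrq h₁
  obtain ⟨rfl, rfl⟩ := SwitchPairs.eq_nil_of_sameSCC hrq h₂
  rfl

noncomputable def runsToEquivOfSameSCC (hu : SCCUnambiguous Δ) (hrq : SameSCC Δ r q) :
    RunsTo Δ r (u.drop k) q ≃ Switchings Δ q u r k :=
  have := RunsTo.subsingleton hu (w := u.drop k) hrq
  have := Switchings.subsingleton (u := u) (k := k) hrq
  equivOfSubsingletonOfSubsingleton
    (fun ρ => ⟨([], []), hrq, hasRun_iff.2 ⟨_, ρ.2⟩⟩)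
    (fun x => ⟨_, (hasRun_iff.1 x.2.hasRun).choose_spec⟩)

end SameSCC

section Switch

variable {q : Q} {u : List A} {r : Q} {k i : ℕ} {δ : Q × A × Q}

namespace FirstSwitch

noncomputable def prefixRun (hF : FirstSwitch Δ u r k i δ) : List Q :=
  (hasRun_iff.1 hF.hasRun).choose

lemma runFrom_prefixRun (hF : FirstSwitch Δ u r k i δ) :
    RunFrom Δ r ((u.take (i - 1)).drop k) hF.prefixRun :=
  (hasRun_iff.1 hF.hasRun).choose_spec.1

lemma getLastD_prefixRun (hF : FirstSwitch Δ u r k i δ) : hF.prefixRun.getLastD r = δ.1 :=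
  (hasRun_iff.1 hF.hasRun).choose_spec.2

lemma length_prefixRun (hF : FirstSwitch Δ u r k i δ) : hF.prefixRun.length = i - 1 - k := by
  rw [hF.runFrom_prefixRun.length_eq_s9, List.length_drop, List.length_take,
    Nat.min_eq_left (by have := hF.le_length; omega)]

lemma sameSCC_of_mem_prefixRun (hF : FirstSwitch Δ u r k i δ) {x : Q}
    (hx : x ∈ hF.prefixRun) : SameSCC Δ r x :=
  hF.runFrom_prefixRun.sameSCC_of_mem (hF.getLastD_prefixRun ▸ hF.sameSCC) hx

lemma prefixRun_eq (hu : SCCUnambiguous Δ) (hF : FirstSwitch Δ u r k i δ) {ρ : List Q}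
    (hρ : RunFrom Δ r ((u.take (i - 1)).drop k) ρ) (he : ρ.getLastD r = δ.1) :
    hF.prefixRun = ρ :=
  hu.eq_of_runFrom hF.sameSCC hF.runFrom_prefixRun hρ hF.getLastD_prefixRun he

noncomputable def consRun (hF : FirstSwitch Δ u r k i δ) (ρ : RunsTo Δ δ.2.2 (u.drop i) q) :
    RunsTo Δ r (u.drop k) q :=
  ⟨hF.prefixRun ++ δ.2.2 :: ρ.1, by
    rw [hF.drop_eq]
    exact hF.runFrom_prefixRun.append_s9 (by rw [getLastD_prefixRun]; exact ⟨hF.step, ρ.2.1⟩),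
    by rw [List.getLastD_append, List.getLastD_cons, ρ.2.2]⟩

end FirstSwitch

variable (Δ u r k) in
abbrev FirstSwitches : Type _ := {y : ℕ × (Q × A × Q) // FirstSwitch Δ u r k y.1 y.2}

variable (Δ q u r k) in
abbrev FirstSwitchRuns : Type _ :=
  Σ y : FirstSwitches Δ u r k, RunsTo Δ y.1.2.2.2 (u.drop y.1.1) q

-- The prefix run stays in the SCC of `r` and the target of the switch does not, so the
-- factorization point is determined by the run.
lemma injective_consRun :
    Function.Injective fun z : FirstSwitchRuns Δ q u r k => z.1.2.consRun z.2 := by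
  rintro ⟨⟨⟨i, x, a, y⟩, hF⟩, ρ⟩ ⟨⟨⟨i', x', a', y'⟩, hF'⟩, ρ'⟩ h
  obtain ⟨hpre, rfl, hρ⟩ := List.eq_of_append_cons_eq (P := SameSCC Δ r)
    (congrArg Subtype.val h) (fun _ => hF.sameSCC_of_mem_prefixRun) hF.not_sameSCC_target
    (fun _ => hF'.sameSCC_of_mem_prefixRun) hF'.not_sameSCC_target
  obtain rfl : i = i' := by
    have := congrArg List.length hpre
    rw [hF.length_prefixRun, hF'.length_prefixRun] at this
    have := hF.lt; have := hF'.lt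
    omega
  obtain rfl : x = x' := by
    simpa only [hpre, hF'.getLastD_prefixRun] using hF.getLastD_prefixRun.symm
  obtain rfl : a = a' := Option.some.inj (hF.getElem?_eq.symm.trans hF'.getElem?_eq)
  obtain rfl := Subtype.ext hρ
  rfl

lemma surjective_consRun (hu : SCCUnambiguous Δ) (hrq : ¬ SameSCC Δ r q) :
    Function.Surjective fun z : FirstSwitchRuns Δ q u r k => z.1.2.consRun z.2 := by
  rintro ⟨ρ, hρ, hend⟩
  obtain ⟨w₁, a, w₂, ρ₁, y, ρ₂, hw, rfl, hρ₁, hr, hδ, hsw, hρ₂⟩ :=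
    hρ.exists_switch (hend ▸ hrq)
  obtain ⟨hw₁, ha, hw₂⟩ := List.drop_take_eq_of_drop_eq_append_cons hw
  have hF : FirstSwitch Δ u r k (k + w₁.length + 1) (ρ₁.getLastD r, a, y) :=
    ⟨by omega, by have := (List.getElem?_eq_some_iff.1 ha).1; omega, ha, hδ, hr, hsw,
      by rw [Nat.add_sub_cancel, hw₁]; exact hρ₁.hasRun⟩
  refine ⟨⟨⟨(_, _), hF⟩, ⟨ρ₂, hw₂ ▸ hρ₂, ?_⟩⟩, Subtype.ext ?_⟩
  · rwa [List.getLastD_append, List.getLastD_cons] at hend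
  · exact congrArg (· ++ y :: ρ₂) (hF.prefixRun_eq hu (by rwa [Nat.add_sub_cancel, hw₁]) rfl)

noncomputable def runsToEquivFirstSwitchRuns (hu : SCCUnambiguous Δ) (hrq : ¬ SameSCC Δ r q) :
    RunsTo Δ r (u.drop k) q ≃ FirstSwitchRuns Δ q u r k :=
  (Equiv.ofBijective _ ⟨injective_consRun, surjective_consRun hu hrq⟩).symm

def switchingsEquivSigma (hrq : ¬ SameSCC Δ r q) :
    Switchings Δ q u r k ≃
      Σ y : FirstSwitches Δ u r k, Switchings Δ q u y.1.2.2.2 y.1.1 where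
  toFun
    | ⟨(δ :: δs, i :: σ), h⟩ => ⟨⟨(i, δ), h.1⟩, ⟨(δs, σ), h.2⟩⟩
    | ⟨([], []), h⟩ => (hrq h.1).elim
  invFun z := ⟨(z.1.1.2 :: z.2.1.1, z.1.1.1 :: z.2.1.2), z.1.2, z.2.2⟩
  left_inv
    | ⟨(_ :: _, _ :: _), _⟩ => rfl
    | ⟨([], []), h⟩ => (hrq h.1).elim
  right_inv _ := rfl

end Switch

theorem nonempty_runsTo_equiv_switchings (hu : SCCUnambiguous Δ) (q : Q) (u : List A)
    (r : Q) (k : ℕ) : Nonempty (RunsTo Δ r (u.drop k) q ≃ Switchings Δ q u r k) := by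
  by_cases hrq : SameSCC Δ r q
  · exact ⟨runsToEquivOfSameSCC hu hrq⟩
  · exact ⟨(runsToEquivFirstSwitchRuns hu hrq).trans <|
      (Equiv.sigmaCongrRight fun y : FirstSwitches Δ u r k =>
        (nonempty_runsTo_equiv_switchings hu q u y.1.2.2.2 y.1.1).some).trans
      (switchingsEquivSigma hrq).symm⟩
termination_by u.length - k
decreasing_by
  have := y.2.lt
  have := y.2.le_length
  omega

section IndexConditions

variable {α β : Type*}

lemma List.forall_getElem?_cons_cons {P : α → β → Prop} {a : α} {l : List α} {b : β}
    {m : List β} :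
    (∀ j : ℕ, ∀ x ∈ (a :: l)[j]?, ∀ y ∈ (b :: m)[j]?, P x y) ↔
      P a b ∧ ∀ j : ℕ, ∀ x ∈ l[j]?, ∀ y ∈ m[j]?, P x y :=
  ⟨fun h => ⟨h 0 a rfl b rfl, fun j => h (j + 1)⟩, fun h j => match j with
    | 0 => by simpa using h.1
    | j + 1 => h.2 j⟩

lemma List.forall_getElem?_cons_succ {R : α → α → Prop} {a : α} {l : List α} :
    (∀ j : ℕ, ∀ x ∈ (a :: l)[j]?, ∀ y ∈ (a :: l)[j + 1]?, R x y) ↔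
      (∀ y ∈ l.head?, R a y) ∧ ∀ j : ℕ, ∀ x ∈ l[j]?, ∀ y ∈ l[j + 1]?, R x y :=
  ⟨fun h => ⟨fun y hy => h 0 a rfl y (by simpa [List.head?_eq_getElem?] using hy),
    fun j => h (j + 1)⟩, fun h j => match j with
    | 0 => by simpa [List.head?_eq_getElem?] using h.1
    | j + 1 => h.2 j⟩

lemma List.forall_getElem?_cons_cons_succ {R : α → β → α → β → Prop} {a : α} {l : List α}
    {b : β} {m : List β} :
    (∀ j : ℕ, ∀ x ∈ (a :: l)[j]?, ∀ y ∈ (b :: m)[j]?, ∀ x' ∈ (a :: l)[j + 1]?,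
      ∀ y' ∈ (b :: m)[j + 1]?, R x y x' y') ↔
      (∀ x' ∈ l.head?, ∀ y' ∈ m.head?, R a b x' y') ∧
        ∀ j : ℕ, ∀ x ∈ l[j]?, ∀ y ∈ m[j]?, ∀ x' ∈ l[j + 1]?, ∀ y' ∈ m[j + 1]?, R x y x' y' :=
  ⟨fun h => ⟨fun x' hx' y' hy' => h 0 a rfl b rfl
      x' (by simpa [List.head?_eq_getElem?] using hx')
      y' (by simpa [List.head?_eq_getElem?] using hy'),
    fun j => h (j + 1)⟩, fun h j => match j with
    | 0 => by simpa [List.head?_eq_getElem?] using h.1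
    | j + 1 => h.2 j⟩

end IndexConditions

variable (Δ) in
/-- `GoodPair` for the run that starts in `r` after position `k` of `u`. -/
def GoodPairFrom (q : Q) (u : List A) (r : Q) (k : ℕ) (δs : List (Q × A × Q)) (σ : List ℕ) :
    Prop :=
  δs ≠ [] ∧ δs.length = σ.length ∧
  (∀ d ∈ δs, Δ d.1 d.2.1 d.2.2) ∧
  List.IsChain (· < ·) (k :: σ) ∧
  (∀ i ∈ σ, i ≤ u.length) ∧
  (∀ j : ℕ, ∀ d ∈ δs[j]?, ∀ i ∈ σ[j]?, u[i - 1]? = some d.2.1) ∧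
  (∀ d ∈ δs.head?, SameSCC Δ r d.1) ∧
  (∀ d ∈ δs, ¬ SameSCC Δ d.1 d.2.2) ∧
  (∀ j : ℕ, ∀ d ∈ δs[j]?, ∀ d' ∈ δs[j + 1]?, SameSCC Δ d.2.2 d'.1) ∧
  (∀ d ∈ δs.getLast?, SameSCC Δ d.2.2 q) ∧
  (∀ d ∈ δs.head?, ∀ i ∈ σ.head?, HasRun Δ r ((u.take (i - 1)).drop k) d.1) ∧
  (∀ j : ℕ, ∀ d ∈ δs[j]?, ∀ i ∈ σ[j]?, ∀ d' ∈ δs[j + 1]?, ∀ i' ∈ σ[j + 1]?,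
    HasRun Δ d.2.2 ((u.take (i' - 1)).drop i) d'.1) ∧
  (∀ d ∈ δs.getLast?, ∀ i ∈ σ.getLast?, HasRun Δ d.2.2 (u.drop i) q)

section GoodPairFrom

variable {q : Q} {u : List A} {r : Q} {k i : ℕ} {δ : Q × A × Q}

lemma firstSwitch_iff : FirstSwitch Δ u r k i δ ↔
    k < i ∧ i ≤ u.length ∧ u[i - 1]? = some δ.2.1 ∧ Δ δ.1 δ.2.1 δ.2.2 ∧ SameSCC Δ r δ.1 ∧
      ¬ SameSCC Δ δ.1 δ.2.2 ∧ HasRun Δ r ((u.take (i - 1)).drop k) δ.1 :=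
  ⟨fun h => ⟨h.1, h.2, h.3, h.4, h.5, h.6, h.7⟩, fun h => ⟨h.1, h.2.1, h.2.2.1, h.2.2.2.1,
    h.2.2.2.2.1, h.2.2.2.2.2.1, h.2.2.2.2.2.2⟩⟩

lemma goodPairFrom_singleton :
    GoodPairFrom Δ q u r k [δ] [i] ↔
      FirstSwitch Δ u r k i δ ∧ SameSCC Δ δ.2.2 q ∧ HasRun Δ δ.2.2 (u.drop i) q := by
  simp only [GoodPairFrom, firstSwitch_iff, List.forall_getElem?_cons_cons,
    List.forall_getElem?_cons_succ, List.forall_getElem?_cons_cons_succ]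
  simp only [List.forall_mem_cons, List.isChain_cons_cons, List.IsChain.singleton, List.head?_cons,
    List.head?_nil, List.getLast?_singleton, List.getElem?_nil, Option.mem_def, reduceCtorEq,
    Option.some.injEq, forall_eq', IsEmpty.forall_iff, implies_true, ne_eq, not_false_eq_true]
  tauto

lemma goodPairFrom_cons_cons {δ' : Q × A × Q} {δs : List (Q × A × Q)} {i' : ℕ} {σ : List ℕ} :
    GoodPairFrom Δ q u r k (δ :: δ' :: δs) (i :: i' :: σ) ↔
      FirstSwitch Δ u r k i δ ∧ GoodPairFrom Δ q u δ.2.2 i (δ' :: δs) (i' :: σ) := by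
  simp only [GoodPairFrom, firstSwitch_iff, List.forall_getElem?_cons_cons,
    List.forall_getElem?_cons_succ, List.forall_getElem?_cons_cons_succ]
  simp only [List.forall_mem_cons, List.isChain_cons_cons, List.head?_cons,
    List.getLast?_cons_cons, List.length_cons, Nat.add_right_cancel_iff, Option.mem_def,
    Option.some.injEq, forall_eq', reduceCtorEq, ne_eq, not_false_eq_true]
  tauto

lemma goodPairFrom_cons_iff {δs : List (Q × A × Q)} {σ : List ℕ} :
    GoodPairFrom Δ q u r k (δ :: δs) (i :: σ) ↔
      FirstSwitch Δ u r k i δ ∧ SwitchPairs Δ q u δ.2.2 i δs σ := by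
  induction δs generalizing r k i δ σ with
  | nil =>
    cases σ with
    | nil => exact goodPairFrom_singleton
    | cons _ _ => simp [GoodPairFrom, SwitchPairs]
  | cons δ' δs ih =>
    cases σ with
    | nil => simp [GoodPairFrom, SwitchPairs]
    | cons i' σ => rw [goodPairFrom_cons_cons, ih]; rfl

lemma switchPairs_iff_goodPairFrom (hrq : ¬ SameSCC Δ r q) {δs : List (Q × A × Q)}
    {σ : List ℕ} : SwitchPairs Δ q u r k δs σ ↔ GoodPairFrom Δ q u r k δs σ := by
  match δs, σ with
  | [], [] => exact ⟨fun h => (hrq h.1).elim, fun h => (h.1 rfl).elim⟩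
  | δ :: δs, i :: σ => exact goodPairFrom_cons_iff.symm
  | [], _ :: _ | _ :: _, [] => simp [SwitchPairs, GoodPairFrom]

end GoodPairFrom

lemma goodPair_iff_goodPairFrom {p q : Q} {u : List A} {δs : List (Q × A × Q)} {σ : List ℕ} :
    GoodPair Δ p q u δs σ ↔ GoodPairFrom Δ q u p 0 δs σ := by
  have hchain : List.IsChain (· < ·) (0 :: σ) ↔ List.IsChain (· < ·) σ ∧ ∀ i ∈ σ, 1 ≤ i := by
    simp only [List.isChain_iff_pairwise, List.pairwise_cons, and_comm]
    rfl
  simp only [GoodPair, GoodPairFrom, hchain, List.drop_zero, forall_and]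
  tauto

/-- For an SCC-unambiguous automaton and states `p ≉ q` not in the same SCC, the runs
from `p` to `q` reading `u` are in bijection with the pairs of a switching-transition
sequence and an increasing sequence of positions satisfying the factor conditions. -/
theorem runs_equiv_switching_pairs (Δ : Q → A → Q → Prop)
    (hscc : SCCUnambiguous Δ) (p q : Q) (hpq : ¬ SameSCC Δ p q) (u : List A) :
    Nonempty
      ({ρ : List Q // RunFrom Δ p u ρ ∧
          (p :: ρ).getLast (List.cons_ne_nil _ _) = q} ≃
        {x : List (Q × A × Q) × List ℕ // GoodPair Δ p q u x.1 x.2}) := by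
  obtain ⟨e⟩ := nonempty_runsTo_equiv_switchings hscc q u p 0
  have hruns : ∀ ρ : List Q, RunFrom Δ p u ρ ∧ (p :: ρ).getLast (List.cons_ne_nil _ _) = q ↔
      RunFrom Δ p (u.drop 0) ρ ∧ ρ.getLastD p = q := by
    simp only [List.getLast_eq_getLastD, List.drop_zero, implies_true]
  have hpairs : ∀ x : List (Q × A × Q) × List ℕ,
      SwitchPairs Δ q u p 0 x.1 x.2 ↔ GoodPair Δ p q u x.1 x.2 := fun _ =>
    (switchPairs_iff_goodPairFrom hpq).trans goodPair_iff_goodPairFrom.symm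
  exact ⟨(Equiv.subtypeEquivRight hruns).trans (e.trans (Equiv.subtypeEquivRight hpairs))⟩
end
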